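/- Let A, B be n×n positive definite complex matrices. Then det(A ♯ B) ≤ (1/2ⁿ)·det(I + A)·det(I + B), where A ♯ B is the geometric mean (v = 1/2). (α = 0 case of Proposition 3.3.) -/

import Mathlib

open Matrix
open scoped ComplexOrder

noncomputable section
namespace Paper

variable {n : ℕ}

/-- Real part `(A + Aᴴ)/2`. -/
def re (A : Matrix (Fin n) (Fin n) ℂ) : Matrix (Fin n) (Fin n) ℂ := (2⁻¹ : ℂ) • (A + Aᴴ)

/-- Imaginary part `(A - Aᴴ)/(2i)`. -/
def im (A : Matrix (Fin n) (Fin n) ℂ) : Matrix (Fin n) (Fin n) ℂ :=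
  (2 * Complex.I)⁻¹ • (A - Aᴴ)

/-- The sector `S_α`. -/
def sector (α : ℝ) : Set ℂ := {z | 0 < z.re ∧ |z.im| ≤ z.re * Real.tan α}

/-- Numerical range of a matrix. -/
def numericalRange (A : Matrix (Fin n) (Fin n) ℂ) : Set ℂ :=
  {z | ∃ x : Fin n → ℂ, star x ⬝ᵥ x = 1 ∧ z = star x ⬝ᵥ (A *ᵥ x)}

/-- Loewner order: `X ≤ Y` iff `Y - X` is positive semidefinite. -/
def loewnerLE (X Y : Matrix (Fin n) (Fin n) ℂ) : Prop := (Y - X).PosSemidef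

lemma re_isHermitian (A : Matrix (Fin n) (Fin n) ℂ) : (re A).IsHermitian := by
  show ((2⁻¹ : ℂ) • (A + Aᴴ))ᴴ = (2⁻¹ : ℂ) • (A + Aᴴ)
  rw [Matrix.conjTranspose_smul, Matrix.conjTranspose_add,
    Matrix.conjTranspose_conjTranspose, add_comm Aᴴ A]
  simp

/-- The `j`-th largest element of `v` (descending sort). -/
def nthLargest (v : Fin n → ℝ) (j : Fin n) : ℝ :=
  ((List.ofFn v).mergeSort (fun a b => decide (b ≤ a))).get
    (Fin.cast (by simp) j)

/-- `j`-th largest eigenvalue of a Hermitian matrix. -/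
def eigDesc {A : Matrix (Fin n) (Fin n) ℂ} (hA : A.IsHermitian) (j : Fin n) : ℝ :=
  nthLargest hA.eigenvalues j

/-- `j`-th largest singular value. -/
def singular (A : Matrix (Fin n) (Fin n) ℂ) (j : Fin n) : ℝ :=
  nthLargest (fun i => Real.sqrt ((Matrix.isHermitian_conjTranspose_mul_self A).eigenvalues i)) j

/-- Square root of a positive semidefinite matrix (the former `Matrix.PosSemidef.sqrt`). -/
def psdSqrt {A : Matrix (Fin n) (Fin n) ℂ} (hA : A.PosSemidef) : Matrix (Fin n) (Fin n) ℂ :=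
  (hA.1.eigenvectorUnitary : Matrix (Fin n) (Fin n) ℂ) *
    diagonal (((↑) : ℝ → ℂ) ∘ Real.sqrt ∘ hA.1.eigenvalues) *
    (star hA.1.eigenvectorUnitary : Matrix (Fin n) (Fin n) ℂ)

/-- Weighted geometric mean of positive definite matrices. -/
def sharp (v : ℝ) {A B : Matrix (Fin n) (Fin n) ℂ} (hA : A.PosDef) (hB : B.PosDef) :
    Matrix (Fin n) (Fin n) ℂ :=
  psdSqrt hA.posSemidef *
    (Matrix.isHermitian_mul_mul_conjTranspose (psdSqrt hA.posSemidef)⁻¹ hB.1).cfc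
      (fun x => Real.rpow x v) * psdSqrt hA.posSemidef

/-- Weighted arithmetic mean. -/
def arith (v : ℝ) (A B : Matrix (Fin n) (Fin n) ℂ) : Matrix (Fin n) (Fin n) ℂ :=
  (1 - v) • A + v • B

/-- Weighted harmonic mean. -/
def harm (v : ℝ) (A B : Matrix (Fin n) (Fin n) ℂ) : Matrix (Fin n) (Fin n) ℂ :=
  ((1 - v) • A⁻¹ + v • B⁻¹)⁻¹

/-- Kantorovich constant. -/
def K (h : ℝ) : ℝ := (h + 1) ^ 2 / (4 * h)

/-!
For `v = 1/2`, `det (A ♯ B) = det A ^ (1/2) * det B ^ (1/2)`, because the middle factor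
`A^{-1/2} B A^{-1/2}` has determinant `det B / det A`. On each eigenvalue `λ ≥ 0`,
`2 √λ ≤ 1 + λ`, so `2ⁿ √(det A) ≤ det (I + A)`, and likewise for `B`. Multiplying gives the bound
with the factor `1 / 4ⁿ ≤ 1 / 2ⁿ`.
-/

end Paper

namespace Matrix

variable {𝕜 m : Type*} [RCLike 𝕜] [Fintype m] [DecidableEq m] {A : Matrix m m 𝕜}

theorem IsHermitian.det_cfc (hA : A.IsHermitian) (f : ℝ → ℝ) :
    (hA.cfc f).det = ∏ i, (f (hA.eigenvalues i) : 𝕜) := by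
  simp [IsHermitian.cfc, -Unitary.conjStarAlgAut_apply]

theorem IsHermitian.one_add_eq_cfc (hA : A.IsHermitian) : 1 + A = hA.cfc (1 + ·) := by
  rw [← hA.cfc_eq, cfc_add .., cfc_const_one .., cfc_id' ..]

theorem PosSemidef.ofReal_re_det (hA : A.PosSemidef) : ((RCLike.re A.det : ℝ) : 𝕜) = A.det :=
  RCLike.conj_eq_iff_re.mp (RCLike.conj_eq_iff_im.mpr (RCLike.nonneg_iff.mp hA.det_nonneg).2)

theorem PosSemidef.det_cfc_sqrt (hA : A.PosSemidef) :
    (hA.isHermitian.cfc Real.sqrt).det = √(RCLike.re A.det) := by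
  rw [hA.isHermitian.det_cfc, hA.isHermitian.det_eq_prod_eigenvalues, ← RCLike.ofReal_prod,
    ← RCLike.ofReal_prod, RCLike.ofReal_re, Real.sqrt_prod _ fun i _ => hA.eigenvalues_nonneg i]

theorem PosSemidef.two_pow_card_mul_sqrt_det_le (hA : A.PosSemidef) :
    2 ^ Fintype.card m * √(RCLike.re A.det) ≤ RCLike.re (1 + A).det := by
  rw [hA.isHermitian.one_add_eq_cfc, hA.isHermitian.det_cfc,
    hA.isHermitian.det_eq_prod_eigenvalues, ← RCLike.ofReal_prod, ← RCLike.ofReal_prod,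
    RCLike.ofReal_re, RCLike.ofReal_re, Real.sqrt_prod _ fun i _ => hA.eigenvalues_nonneg i,
    ← Finset.card_univ, ← Finset.prod_const, ← Finset.prod_mul_distrib]
  refine Finset.prod_le_prod (fun i _ => by positivity) fun i _ => ?_
  simpa [Real.sq_sqrt (hA.eigenvalues_nonneg i)] using
    two_mul_le_add_sq 1 √(hA.isHermitian.eigenvalues i)

end Matrix

namespace Paper

variable {n : ℕ}

-- `psdSqrt hA` unfolds to `hA.isHermitian.cfc Real.sqrt`.
theorem det_psdSqrt {A : Matrix (Fin n) (Fin n) ℂ} (hA : A.PosSemidef) :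
    (psdSqrt hA).det = √A.det.re :=
  hA.det_cfc_sqrt

theorem re_det_mul_re_det_psdSqrt_inv_conj {A B : Matrix (Fin n) (Fin n) ℂ} (hA : A.PosDef)
    (hB : B.PosSemidef) :
    A.det.re * ((psdSqrt hA.posSemidef)⁻¹ * B * (psdSqrt hA.posSemidef)⁻¹ᴴ).det.re = B.det.re := by
  set S := psdSqrt hA.posSemidef
  set M := S⁻¹ * B * S⁻¹ᴴ
  have hApos : 0 < A.det.re := (RCLike.pos_iff.mp hA.det_pos).1
  have hS : S.det = √A.det.re := det_psdSqrt hA.posSemidef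
  have hSinv : S * S⁻¹ = 1 := mul_nonsing_inv S (by simp [hS, (Real.sqrt_pos.mpr hApos).ne'])
  have hSMS : S * M * Sᴴ = B := by
    simp only [M, Matrix.mul_assoc, ← conjTranspose_mul, hSinv, conjTranspose_one, Matrix.mul_one]
    rw [← Matrix.mul_assoc, hSinv, Matrix.one_mul]
  have hMre : (M.det.re : ℂ) = M.det := (hB.mul_mul_conjTranspose_same S⁻¹).ofReal_re_det
  have hBre : (B.det.re : ℂ) = B.det := hB.ofReal_re_det
  have h := congrArg det hSMS
  rw [det_mul, det_mul, det_conjTranspose, hS, Complex.star_def, Complex.conj_ofReal, ← hMre,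
    ← hBre] at h
  have h' : √A.det.re * M.det.re * √A.det.re = B.det.re := by exact_mod_cast h
  rw [← h', mul_comm _ (√_), ← mul_assoc, Real.mul_self_sqrt hApos.le]

theorem det_sharp_half {A B : Matrix (Fin n) (Fin n) ℂ} (hA : A.PosDef) (hB : B.PosDef) :
    (sharp (1 / 2) hA hB).det = ↑(√A.det.re * √B.det.re) := by
  set S := psdSqrt hA.posSemidef
  have hApos : 0 < A.det.re := (RCLike.pos_iff.mp hA.det_pos).1
  have hM : (S⁻¹ * B * S⁻¹ᴴ).PosSemidef := hB.posSemidef.mul_mul_conjTranspose_same S⁻¹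
  have hsqrtM : (isHermitian_mul_mul_conjTranspose S⁻¹ hB.1).cfc (fun x => Real.rpow x (1 / 2))
      = hM.isHermitian.cfc Real.sqrt :=
    congrArg _ (funext fun x => (Real.sqrt_eq_rpow x).symm)
  have hdetM : (hM.isHermitian.cfc Real.sqrt).det = √(S⁻¹ * B * S⁻¹ᴴ).det.re := hM.det_cfc_sqrt
  rw [sharp, det_mul, det_mul, hsqrtM, hdetM, det_psdSqrt,
    ← re_det_mul_re_det_psdSqrt_inv_conj hA hB.posSemidef,
    Real.sqrt_mul hApos.le]
  push_cast
  ring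

/-- `det (A ♯ B) ≤ 2⁻ⁿ det (I + A) det (I + B)`. -/
theorem det_sharp_le (A B : Matrix (Fin n) (Fin n) ℂ) (hA : A.PosDef) (hB : B.PosDef) :
    ((sharp (1 / 2) hA hB).det).re ≤
      (1 / 2 ^ n) * ((1 + A).det).re * ((1 + B).det).re := by
  have hA' : 2 ^ n * √A.det.re ≤ (1 + A).det.re := by
    simpa using hA.posSemidef.two_pow_card_mul_sqrt_det_le
  have hB' : 2 ^ n * √B.det.re ≤ (1 + B).det.re := by
    simpa using hB.posSemidef.two_pow_card_mul_sqrt_det_le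
  have h2n : (1 : ℝ) ≤ 2 ^ n := one_le_pow₀ one_le_two
  rw [det_sharp_half, Complex.ofReal_re, mul_assoc, one_div, ← div_eq_inv_mul,
    le_div_iff₀ (by positivity)]
  calc √A.det.re * √B.det.re * 2 ^ n ≤ (2 ^ n * √A.det.re) * (2 ^ n * √B.det.re) :=
        (le_mul_of_one_le_right (by positivity) h2n).trans_eq (by ring)
    _ ≤ (1 + A).det.re * (1 + B).det.re :=
        mul_le_mul hA' hB' (by positivity) (le_trans (by positivity) hA')

end Paper
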